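/- For every complex number t with Im(t) < 0 one has arcsin(1/(2t)) = π/2 - i·log((1 - (1-4t²)^{1/2})/(2t)). -/
import Mathlib
open Complex

noncomputable section

lemma sqrt_re_nonneg' (z : ℂ) : 0 ≤ (z ^ ((1:ℂ)/2)).re := by
  rcases eq_or_ne z 0 with rfl | hz
  · simp [Complex.zero_cpow (by norm_num : ((1:ℂ)/2) ≠ 0)]
  rw [Complex.cpow_def_of_ne_zero hz, Complex.exp_re]
  have him : (Complex.log z * ((1:ℂ)/2)).im = z.arg / 2 := by
    simp [Complex.mul_im, Complex.log_im]; ring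
  rw [him]
  have : Real.cos (z.arg / 2) ≥ 0 := by
    apply Real.cos_nonneg_of_mem_Icc
    constructor
    · linarith [Complex.neg_pi_lt_arg z]
    · linarith [Complex.arg_le_pi z]
  positivity

lemma sqrt_re_pos_of_pos {z : ℂ} (hre : 0 < z.re) (him : z.im = 0) :
    0 < (z ^ ((1:ℂ)/2)).re := by
  have hz : z ≠ 0 := fun h => by simp [h] at hre
  have harg : z.arg = 0 := Complex.arg_eq_zero_iff.2 ⟨hre.le, him⟩
  rw [Complex.cpow_def_of_ne_zero hz, Complex.exp_re]
  have him' : (Complex.log z * ((1:ℂ)/2)).im = z.arg / 2 := by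
    simp [Complex.mul_im, Complex.log_im]; ring
  rw [him', harg]
  simp [Real.exp_pos]

lemma sqrt_im_pos_of_pos {z : ℂ} (him : 0 < z.im) : 0 < (z ^ ((1:ℂ)/2)).im := by
  have hz : z ≠ 0 := fun h => by simp [h] at him
  have harg : 0 < z.arg := by
    rcases lt_trichotomy z.arg 0 with h | h | h
    · exact absurd (Complex.arg_neg_iff.1 h) (by linarith)
    · exact absurd (Complex.arg_eq_zero_iff.1 h).2 (by intro h'; linarith)
    · exact h
  rw [Complex.cpow_def_of_ne_zero hz, Complex.exp_im]
  have him' : (Complex.log z * ((1:ℂ)/2)).im = z.arg / 2 := by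
    simp [Complex.mul_im, Complex.log_im]; ring
  rw [him']
  have hs : 0 < Real.sin (z.arg / 2) := by
    apply Real.sin_pos_of_pos_of_lt_pi
    · linarith
    · linarith [Complex.arg_le_pi z, Real.pi_pos]
  positivity

lemma sqrt_im_neg_of_neg {z : ℂ} (him : z.im < 0) : (z ^ ((1:ℂ)/2)).im < 0 := by
  have hz : z ≠ 0 := fun h => by simp [h] at him
  have harg : z.arg < 0 := Complex.arg_neg_iff.2 him
  rw [Complex.cpow_def_of_ne_zero hz, Complex.exp_im]
  have him' : (Complex.log z * ((1:ℂ)/2)).im = z.arg / 2 := by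
    simp [Complex.mul_im, Complex.log_im]; ring
  rw [him']
  have hs : Real.sin (z.arg / 2) < 0 := by
    apply Real.sin_neg_of_neg_of_neg_pi_lt
    · linarith
    · linarith [Complex.neg_pi_lt_arg z, Real.pi_pos]
  have := Real.exp_pos (Complex.log z * ((1:ℂ)/2)).re
  nlinarith

/-- The principal branch of the complex inverse sine,
`arcsin z = -i·log((1-z²)^{1/2} + i z)`. -/
def carcsin (z : ℂ) : ℂ :=
  -Complex.I * Complex.log ((1 - z ^ 2) ^ ((1 : ℂ) / 2) + Complex.I * z)

/-- For `Im t < 0`, `arcsin(1/(2t)) = π/2 - i·log((1 - (1-4t²)^{1/2})/(2t))`. -/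
theorem stmt_12 (t : ℂ) (ht : t.im < 0) :
    carcsin (1 / (2 * t)) =
      (Real.pi : ℂ) / 2 -
        Complex.I * Complex.log ((1 - (1 - 4 * t ^ 2) ^ ((1 : ℂ) / 2)) / (2 * t)) := by
  have ht0 : t ≠ 0 := fun h => by simp [h] at ht
  have h2t : (2 : ℂ) * t ≠ 0 := mul_ne_zero two_ne_zero ht0
  set z : ℂ := 1 - 4 * t ^ 2 with hzdef
  set s : ℂ := z ^ ((1:ℂ)/2) with hsdef
  have hs2 : s ^ 2 = z := by
    rw [hsdef, show ((1:ℂ)/2) = (((2:ℕ)):ℂ)⁻¹ by norm_num]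
    exact Complex.cpow_nat_inv_pow z two_ne_zero
  have hs2' : s ^ 2 = 1 - 4 * t ^ 2 := hs2
  have hz_im : z.im = -8 * t.re * t.im := by
    simp [hzdef, pow_two, Complex.sub_im, Complex.mul_im, Complex.mul_re]; ring
  have hz_re : z.re = 1 - 4 * (t.re ^ 2 - t.im ^ 2) := by
    simp [hzdef, pow_two, Complex.sub_re, Complex.mul_re, Complex.mul_im]
  have hsre : 0 ≤ s.re := sqrt_re_nonneg' z
  -- key sign facts
  have hkey : 0 < s.re * (-t.im) + s.im * t.re ∧ 0 ≤ s.im * t.re := by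
    rcases lt_trichotomy t.re 0 with hx | hx | hx
    · have hzi : z.im < 0 := by rw [hz_im]; nlinarith
      have hb : s.im < 0 := sqrt_im_neg_of_neg hzi
      constructor
      · nlinarith
      · nlinarith
    · have hzi : z.im = 0 := by rw [hz_im, hx]; ring
      have hzr : 0 < z.re := by rw [hz_re, hx]; nlinarith
      have ha : 0 < s.re := sqrt_re_pos_of_pos hzr hzi
      constructor
      · rw [hx]; nlinarith
      · rw [hx]; simp
    · have hzi : 0 < z.im := by rw [hz_im]; nlinarith
      have hb : 0 < s.im := sqrt_im_pos_of_pos hzi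
      constructor
      · nlinarith
      · nlinarith
  obtain ⟨hkey1, hkey2⟩ := hkey
  set w : ℂ := -Complex.I * s / (2 * t) with hwdef
  have hnsq : 0 < Complex.normSq (2 * t) := Complex.normSq_pos.2 h2t
  have hwre : 0 < w.re := by
    have : w.re = (s.im * (2 * t.re) + (-s.re) * (2 * t.im)) / Complex.normSq (2 * t) := by
      rw [hwdef, Complex.div_re]
      simp [Complex.mul_re, Complex.mul_im]
      ring
    rw [this]
    apply div_pos _ hnsq
    nlinarith
  have hsq : 1 - (1 / (2 * t)) ^ 2 = w ^ 2 := by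
    rw [hwdef]
    field_simp
    linear_combination hs2' + (-(s^2)) * Complex.I_sq
  have hws : (w ^ 2) ^ ((1:ℂ)/2) = w := by
    rw [show ((1:ℂ)/2) = (((2:ℕ)):ℂ)⁻¹ by norm_num]
    apply Complex.pow_cpow_nat_inv two_ne_zero
    · push_cast
      exact Complex.neg_pi_div_two_lt_arg_iff.2 (Or.inl hwre)
    · push_cast
      exact Complex.arg_le_pi_div_two_iff.2 (Or.inl hwre.le)
  set u : ℂ := (1 - s) / (2 * t) with hudef
  have h1s : (1 : ℂ) + s ≠ 0 := by
    intro h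
    have : ((1 : ℂ) + s).re = 0 := by rw [h]; simp
    simp [Complex.add_re] at this
    linarith
  have hu' : u = 2 * t / (1 + s) := by
    rw [hudef, div_eq_div_iff h2t h1s]
    linear_combination (-1 : ℂ) * hs2'
  have huim : u.im < 0 := by
    rw [hu', Complex.div_im]
    have hns : 0 < Complex.normSq (1 + s) := Complex.normSq_pos.2 h1s
    have h1 : (2 * t).im * (1 + s).re = 2 * t.im * (1 + s.re) := by
      simp [Complex.mul_im, Complex.add_re]
    have h2 : (2 * t).re * (1 + s).im = 2 * t.re * s.im := by
      simp [Complex.mul_re, Complex.add_im]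
    rw [h1, h2]
    rw [div_sub_div_same]
    apply div_neg_of_neg_of_pos _ hns
    nlinarith
  have hu0 : u ≠ 0 := fun h => by simp [h] at huim
  have hiu : (1 - (1 / (2 * t)) ^ 2) ^ ((1:ℂ)/2) + Complex.I * (1 / (2 * t)) = Complex.I * u := by
    rw [hsq, hws, hwdef, hudef]
    field_simp
    ring
  have hlog : Complex.log (Complex.I * u) = Complex.log Complex.I + Complex.log u := by
    apply Complex.log_mul Complex.I_ne_zero hu0
    rw [Complex.arg_I]
    have h1 : u.arg < 0 := Complex.arg_neg_iff.2 huim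
    have h2 : -Real.pi < u.arg := Complex.neg_pi_lt_arg u
    constructor
    · nlinarith [Real.pi_pos]
    · nlinarith [Real.pi_pos]
  rw [carcsin, hiu, hlog, Complex.log_I]
  linear_combination (-(Real.pi : ℂ)/2) * Complex.I_sq
end
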